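/- For every m ≥ 1, the number of occurrences of the letter b among the first f_{2m+2} − 1 letters of the Fibonacci word is exactly f_{2m}, and position f_{2m+2} − 1 (1-indexed) holds the f_{2m}-th occurrence of b; i.e., P(b, f_{2m}) = f_{2m+2} − 1, where P(b,p) denotes the ending position of the p-th occurrence of b in 𝔽. -/
import Mathlib


/-- Finite Fibonacci words: `fibF 0 = a`, `fibF 1 = ab`,
`fibF (m+2) = fibF (m+1) ++ fibF m`, with letters `a = false`, `b = true`.
Each `fibF m` is a prefix of the next, so a word is a factor of the infinite
Fibonacci word `𝔽` iff it is a factor (infix) of some `fibF m`. -/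
def fibF : ℕ → List Bool
  | 0 => [false]
  | 1 => [false, true]
  | n + 2 => fibF (n + 1) ++ fibF n

/-- A word is a factor of the infinite Fibonacci word. -/
def IsFactorF (w : List Bool) : Prop := ∃ m, w <:+: fibF m

/-- The prefix `𝔽[1,n]` of the infinite Fibonacci word of length `n`
(`fibF n` has length `fib (n+2) ≥ n`). -/
def fibPrefix (n : ℕ) : List Bool := (fibF n).take n

lemma fibF_length : ∀ k, (fibF k).length = Nat.fib (k + 2)
  | 0 => rfl
  | 1 => rfl
  | k + 2 => by
    show (fibF (k+1) ++ fibF k).length = Nat.fib ((k + 2) + 2)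
    rw [List.length_append, fibF_length (k+1), fibF_length k]
    conv_rhs => rw [Nat.fib_add_two]
    rw [show k + 1 + 2 = k + 2 + 1 from by omega]
    omega

lemma fibF_count : ∀ k, (fibF k).count true = Nat.fib k
  | 0 => rfl
  | 1 => rfl
  | k + 2 => by
    show (fibF (k+1) ++ fibF k).count true = Nat.fib (k + 2)
    rw [List.count_append, fibF_count (k+1), fibF_count k]
    conv_rhs => rw [Nat.fib_add_two]
    rw [show k + 1 = k + 0 + 1 from by omega]
    omega

lemma fibF_prefix_succ (k : ℕ) : fibF k <+: fibF (k + 1) := by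
  match k with
  | 0 => exact ⟨[true], rfl⟩
  | k + 1 => exact ⟨fibF k, rfl⟩

lemma fibF_prefix {i j : ℕ} (h : i ≤ j) : fibF i <+: fibF j := by
  induction j with
  | zero => simp [Nat.le_zero.mp h]
  | succ j ih =>
    rcases Nat.lt_or_ge i (j+1) with h' | h'
    · exact (ih (Nat.lt_succ_iff.mp h')).trans (fibF_prefix_succ j)
    · rw [Nat.le_antisymm h h']

lemma fibF_end : ∀ m, ∃ w : List Bool, fibF (2 * m + 2) = w ++ [true, false]
  | 0 => ⟨[false], rfl⟩
  | m + 1 => by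
    obtain ⟨w, hw⟩ := fibF_end m
    refine ⟨fibF (2 * m + 3) ++ w, ?_⟩
    have : 2 * (m + 1) + 2 = (2 * m + 2) + 2 := by ring
    rw [this]
    show fibF (2*m+3) ++ fibF (2*m+2) = _
    rw [hw, List.append_assoc]

/-- With `f_m = Nat.fib (m + 2)`: for `m ≥ 1`, the number of occurrences of the
letter `b` (`= true`) among the first `f_{2m+2} − 1` letters of `𝔽` is exactly
`f_{2m}`, and the letter at position `f_{2m+2} − 1` (1-indexed, i.e. the last
letter of that prefix) is `b`; hence `P(b, f_{2m}) = f_{2m+2} − 1`. -/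
theorem stmt_19 (m : ℕ) (hm : 1 ≤ m) :
    (fibPrefix (Nat.fib (2 * m + 4) - 1)).count true = Nat.fib (2 * m + 2) ∧
    (fibPrefix (Nat.fib (2 * m + 4) - 1)).getLast? = some true := by
  set n := Nat.fib (2 * m + 4) - 1 with hn
  obtain ⟨w, hw⟩ := fibF_end m
  have hlen : (fibF (2 * m + 2)).length = Nat.fib (2 * m + 4) := fibF_length _
  have hfib : 2 * m + 4 ≤ Nat.fib (2 * m + 4) := Nat.le_fib_self (by omega)
  have hk : 2 * m + 2 ≤ n := by omega
  obtain ⟨t, ht⟩ := fibF_prefix hk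
  have hwl : w.length + 2 = Nat.fib (2 * m + 4) := by
    rw [← hlen, hw]; simp
  have hnl : n = (w ++ [true]).length := by simp; omega
  have key : fibPrefix n = w ++ [true] := by
    have : fibF n = (w ++ [true]) ++ ([false] ++ t) := by
      rw [← ht, hw]; simp
    rw [fibPrefix, this, List.take_left' hnl.symm]
  have hcnt : (fibF (2*m+2)).count true = Nat.fib (2*m+2) := fibF_count _
  rw [hw] at hcnt
  simp [List.count_append] at hcnt
  constructor
  · rw [key]; simp [List.count_append]; omega
  · rw [key, List.getLast?_concat]
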